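/- arXiv:1908.05826 — 3 statements merged into one kernel-verified Lean document; each statement's English description precedes it below -/
import Mathlib

section
/- Let ℬ be a closed subarrangement of a central arrangement 𝒜. Then the projection π: 𝕃(𝒜) → 𝕃(ℬ) (sending hyperplanes in 𝒜∖ℬ to 0) maps the holonomy relation ideal I(𝒜) onto I(ℬ), and moreover I(𝒜) ∩ 𝕃(ℬ) = I(ℬ). -/
open Module

noncomputable section

/-- The ambient type of subspaces of `ℂ^ℓ`; a central arrangement is a finite set of
codimension-1 subspaces. -/
abbrev HypSp (ℓ : ℕ) := Submodule ℂ (Fin ℓ → ℂ)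

/-- The rank (codimension) of a flat. -/
def flatRank {ℓ : ℕ} (W : HypSp ℓ) : ℕ := ℓ - finrank ℂ W

/-- `𝒜` is a central arrangement of hyperplanes in `ℂ^ℓ`. -/
def IsArrangement {ℓ : ℕ} (𝒜 : Finset (HypSp ℓ)) : Prop :=
  ∀ H ∈ 𝒜, finrank ℂ H + 1 = ℓ

/-- The free Lie algebra over `ℚ` on the hyperplanes of `𝒜`. -/
abbrev FreeLie {ℓ : ℕ} (𝒜 : Finset (HypSp ℓ)) := FreeLieAlgebra ℚ {H : HypSp ℓ // H ∈ 𝒜}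

/-- `L` is a rank-2 flat of `𝒜`: the intersection of two distinct hyperplanes of `𝒜`. -/
def IsRank2Flat {ℓ : ℕ} (𝒜 : Finset (HypSp ℓ)) (L : HypSp ℓ) : Prop :=
  ∃ H₁ ∈ 𝒜, ∃ H₂ ∈ 𝒜, H₁ ≠ H₂ ∧ L = H₁ ⊓ H₂

open scoped Classical in
/-- `ΣL`: the sum, in the free Lie algebra, of all hyperplanes of `𝒜` below the flat `L`
(i.e. containing `L`). -/
def sigmaL {ℓ : ℕ} (𝒜 : Finset (HypSp ℓ)) (L : HypSp ℓ) : FreeLie 𝒜 :=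
  ∑ H ∈ 𝒜.attach, if L ≤ (H : HypSp ℓ) then FreeLieAlgebra.of ℚ H else 0

/-- The holonomy ideal `I(𝒜)`, generated by the `[H, ΣL]` for rank-2 flats `L` and
hyperplanes `H ⪯ L`. -/
def holIdeal {ℓ : ℕ} (𝒜 : Finset (HypSp ℓ)) : LieIdeal ℚ (FreeLie 𝒜) :=
  LieSubmodule.lieSpan ℚ (FreeLie 𝒜)
    {z | ∃ L : HypSp ℓ, IsRank2Flat 𝒜 L ∧ ∃ H : {H : HypSp ℓ // H ∈ 𝒜},
      L ≤ (H : HypSp ℓ) ∧ z = ⁅FreeLieAlgebra.of ℚ H, sigmaL 𝒜 L⁆}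

/-- The holonomy Lie algebra `𝔥(𝒜) = 𝕃(𝒜)/I(𝒜)`. -/
abbrev Holonomy {ℓ : ℕ} (𝒜 : Finset (HypSp ℓ)) := FreeLie 𝒜 ⧸ holIdeal 𝒜

/-- `ℬ` is a closed subarrangement of `𝒜`. -/
def IsClosedSub {ℓ : ℕ} (ℬ 𝒜 : Finset (HypSp ℓ)) : Prop :=
  ℬ ⊆ 𝒜 ∧ ∀ α ∈ ℬ, ∀ β ∈ ℬ, α ≠ β → ∀ c ∈ 𝒜, c ∉ ℬ → flatRank (α ⊓ β ⊓ c) = 3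

open scoped Classical in
/-- The projection `π : 𝕃(𝒜) → 𝕃(ℬ)` sending hyperplanes outside `ℬ` to `0`. -/
def arrPi {ℓ : ℕ} (ℬ 𝒜 : Finset (HypSp ℓ)) : FreeLie 𝒜 →ₗ⁅ℚ⁆ FreeLie ℬ :=
  FreeLieAlgebra.lift ℚ (fun H => if h : (H : HypSp ℓ) ∈ ℬ then
    FreeLieAlgebra.of ℚ (⟨(H : HypSp ℓ), h⟩ : {H : HypSp ℓ // H ∈ ℬ}) else 0)

/-- The inclusion `σ : 𝕃(ℬ) → 𝕃(𝒜)`. -/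
def arrSigma {ℓ : ℕ} (ℬ 𝒜 : Finset (HypSp ℓ)) (hsub : ℬ ⊆ 𝒜) : FreeLie ℬ →ₗ⁅ℚ⁆ FreeLie 𝒜 :=
  FreeLieAlgebra.lift ℚ (fun H => FreeLieAlgebra.of ℚ
    (⟨(H : HypSp ℓ), hsub H.2⟩ : {H : HypSp ℓ // H ∈ 𝒜}))

/-! The projection `π` is a left inverse of the inclusion `σ`, so both equalities follow from
`π(I(𝒜)) ⊆ I(ℬ)` and `σ(I(ℬ)) ⊆ I(𝒜)`. The projection kills a generator `[H, ΣL]` unless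
`H ∈ ℬ`, and otherwise sends it to `[H, ΣL]` computed in `ℬ`: a generator of `I(ℬ)` if a second
hyperplane of `ℬ` contains `L`, and `[H, H] = 0` if not. Conversely, closedness says that every
hyperplane of `𝒜` containing the intersection of two hyperplanes of `ℬ` lies in `ℬ`, so `σ`
sends the sums `ΣL` of `ℬ` to those of `𝒜`. -/

open Function

theorem Submodule.map_eq_of_leftInverse {R M N : Type*} [Semiring R] [AddCommMonoid M]
    [AddCommMonoid N] [Module R M] [Module R N] {p : M →ₗ[R] N} {s : N →ₗ[R] M}
    (hps : LeftInverse p s) {I : Submodule R M} {J : Submodule R N}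
    (hp : I.map p ≤ J) (hs : J.map s ≤ I) : I.map p = J :=
  le_antisymm hp fun y hy => ⟨s y, hs ⟨y, hy, rfl⟩, hps y⟩

theorem Submodule.inf_range_eq_map_of_leftInverse {R M N : Type*} [Semiring R]
    [AddCommMonoid M] [AddCommMonoid N] [Module R M] [Module R N] {p : M →ₗ[R] N}
    {s : N →ₗ[R] M} (hps : LeftInverse p s) {I : Submodule R M} {J : Submodule R N}
    (hp : I.map p ≤ J) (hs : J.map s ≤ I) : I ⊓ LinearMap.range s = J.map s := by
  refine le_antisymm ?_ fun x hx => ⟨hs hx, LinearMap.map_le_range hx⟩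
  rintro _ ⟨hxI, y, rfl⟩
  exact ⟨y, hps y ▸ hp ⟨s y, hxI, rfl⟩, rfl⟩

theorem Finset.sum_attach_dite_mem {ι M : Type*} [AddCommMonoid M] {s t : Finset ι}
    [DecidablePred (· ∈ s)] (hst : s ⊆ t) (f : s → M) :
    ∑ x ∈ t.attach, (if h : x.1 ∈ s then f ⟨x, h⟩ else 0) = ∑ x ∈ s.attach, f x := by
  let g : ι → M := fun x => if h : x ∈ s then f ⟨x, h⟩ else 0
  calc ∑ x ∈ t.attach, g x = ∑ x ∈ t, g x := sum_attach t g
    _ = ∑ x ∈ s, g x := (sum_subset hst fun x _ hx => dif_neg hx).symm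
    _ = ∑ x ∈ s.attach, g x := (sum_attach s g).symm
    _ = ∑ x ∈ s.attach, f x := sum_congr rfl fun x _ => dif_pos x.2

theorem finrank_inf_add_two_of_ne {K V : Type*} [DivisionRing K] [AddCommGroup V] [Module K V]
    [FiniteDimensional K V] {α β : Submodule K V} (hα : finrank K α + 1 = finrank K V)
    (hβ : finrank K β + 1 = finrank K V) (hne : α ≠ β) :
    finrank K ↥(α ⊓ β) + 2 = finrank K V := by
  have hβα : ¬ β ≤ α := fun h => hne (Submodule.eq_of_le_of_finrank_eq h (by omega)).symm
  have hlt : finrank K α < finrank K ↥(α ⊔ β) :=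
    Submodule.finrank_lt_finrank_of_lt (left_lt_sup.mpr hβα)
  have hle : finrank K ↥(α ⊔ β) ≤ finrank K V := Submodule.finrank_le _
  have := Submodule.finrank_sup_add_finrank_inf_eq α β
  omega

section Arrangement

variable {ℓ : ℕ} {ℬ 𝒜 : Finset (HypSp ℓ)}

theorem IsArrangement.finrank_inf_add_two (harr : IsArrangement 𝒜) {α β : HypSp ℓ}
    (hα : α ∈ 𝒜) (hβ : β ∈ 𝒜) (hne : α ≠ β) : finrank ℂ ↥(α ⊓ β) + 2 = ℓ := by
  simpa using finrank_inf_add_two_of_ne (α := α) (β := β) (by simpa using harr α hα)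
    (by simpa using harr β hβ) hne

theorem IsRank2Flat.eq_inf (harr : IsArrangement 𝒜) {L : HypSp ℓ} (hL : IsRank2Flat 𝒜 L)
    {α β : HypSp ℓ} (hα : α ∈ 𝒜) (hβ : β ∈ 𝒜) (hne : α ≠ β) (hLα : L ≤ α) (hLβ : L ≤ β) :
    L = α ⊓ β := by
  obtain ⟨H₁, hH₁, H₂, hH₂, hH, rfl⟩ := hL
  have := harr.finrank_inf_add_two hH₁ hH₂ hH
  have := harr.finrank_inf_add_two hα hβ hne
  exact Submodule.eq_of_le_of_finrank_eq (le_inf hLα hLβ) (by omega)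

theorem IsClosedSub.mem_of_inf_le (hclosed : IsClosedSub ℬ 𝒜) (harr : IsArrangement 𝒜)
    {α β c : HypSp ℓ} (hα : α ∈ ℬ) (hβ : β ∈ ℬ) (hne : α ≠ β) (hc : c ∈ 𝒜)
    (hαβc : α ⊓ β ≤ c) : c ∈ ℬ := by
  by_contra hcℬ
  have hrank := hclosed.2 α hα β hβ hne c hc hcℬ
  rw [inf_eq_left.mpr hαβc, flatRank] at hrank
  have := harr.finrank_inf_add_two (hclosed.1 hα) (hclosed.1 hβ) hne
  omega

end Arrangement

section FreeLie

open scoped Classical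
open FreeLieAlgebra

variable {ℓ : ℕ} {ℬ 𝒜 : Finset (HypSp ℓ)}

theorem arrPi_of (H : {H : HypSp ℓ // H ∈ 𝒜}) :
    arrPi ℬ 𝒜 (of ℚ H) = if h : H.1 ∈ ℬ then of ℚ ⟨H.1, h⟩ else 0 :=
  lift_of_apply _ _

theorem arrSigma_of (hsub : ℬ ⊆ 𝒜) (H : {H : HypSp ℓ // H ∈ ℬ}) :
    arrSigma ℬ 𝒜 hsub (of ℚ H) = of ℚ ⟨H.1, hsub H.2⟩ :=
  lift_of_apply _ _

theorem leftInverse_arrPi_arrSigma (hsub : ℬ ⊆ 𝒜) :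
    LeftInverse (arrPi ℬ 𝒜) (arrSigma ℬ 𝒜 hsub) := by
  have hcomp : (arrPi ℬ 𝒜).comp (arrSigma ℬ 𝒜 hsub) = LieHom.id :=
    hom_ext fun H => by simp [arrSigma_of, arrPi_of]
  exact fun x => congr($hcomp x)

theorem arrPi_sigmaL (hsub : ℬ ⊆ 𝒜) (L : HypSp ℓ) : arrPi ℬ 𝒜 (sigmaL 𝒜 L) = sigmaL ℬ L := by
  rw [sigmaL, map_sum]
  refine .trans ?_ (Finset.sum_attach_dite_mem hsub _)
  refine Finset.sum_congr rfl fun H _ => ?_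
  split_ifs <;> simp_all [arrPi_of]

theorem arrSigma_sigmaL (hsub : ℬ ⊆ 𝒜) {L : HypSp ℓ} (hL : ∀ c ∈ 𝒜, L ≤ c → c ∈ ℬ) :
    arrSigma ℬ 𝒜 hsub (sigmaL ℬ L) = sigmaL 𝒜 L := by
  rw [sigmaL, map_sum, sigmaL, ← Finset.sum_attach_dite_mem hsub]
  refine Finset.sum_congr rfl fun H _ => ?_
  by_cases hH : H.1 ∈ ℬ
  · rw [dif_pos hH]
    split_ifs <;> simp [arrSigma_of]
  · rw [dif_neg hH, if_neg fun h => hH (hL H H.2 h)]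

theorem sigmaL_eq_of_forall_le_eq {L : HypSp ℓ} {H : {H : HypSp ℓ // H ∈ 𝒜}} (hLH : L ≤ H.1)
    (huniq : ∀ K ∈ 𝒜, L ≤ K → K = H.1) : sigmaL 𝒜 L = of ℚ H := by
  rw [sigmaL, Finset.sum_eq_single_of_mem H (Finset.mem_attach _ _), if_pos hLH]
  exact fun K _ hKH => if_neg fun h => hKH (Subtype.ext (huniq K K.2 h))

theorem arrPi_lie_sigmaL_mem_holIdeal (harr : IsArrangement 𝒜) (hclosed : IsClosedSub ℬ 𝒜)
    {L : HypSp ℓ} (hL : IsRank2Flat 𝒜 L) (H : {H : HypSp ℓ // H ∈ 𝒜}) (hLH : L ≤ H.1) :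
    arrPi ℬ 𝒜 ⁅of ℚ H, sigmaL 𝒜 L⁆ ∈ holIdeal ℬ := by
  rw [LieHom.map_lie, arrPi_sigmaL hclosed.1, arrPi_of]
  split_ifs with hHℬ
  · by_cases huniq : ∀ K ∈ ℬ, L ≤ K → K = H.1
    · rw [sigmaL_eq_of_forall_le_eq (H := ⟨H.1, hHℬ⟩) hLH huniq, lie_self]
      exact zero_mem _
    · push Not at huniq
      obtain ⟨β, hβ, hLβ, hβH⟩ := huniq
      have hLeq : L = H.1 ⊓ β :=
        hL.eq_inf harr (hclosed.1 hHℬ) (hclosed.1 hβ) hβH.symm hLH hLβ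
      exact LieSubmodule.subset_lieSpan
        ⟨L, ⟨H.1, hHℬ, β, hβ, hβH.symm, hLeq⟩, ⟨H.1, hHℬ⟩, hLH, rfl⟩
  · rw [zero_lie]
    exact zero_mem _

theorem holIdeal_le_comap_arrPi (harr : IsArrangement 𝒜) (hclosed : IsClosedSub ℬ 𝒜) :
    holIdeal 𝒜 ≤ (holIdeal ℬ).comap (arrPi ℬ 𝒜) := by
  rw [holIdeal, LieSubmodule.lieSpan_le]
  rintro _ ⟨L, hL, H, hLH, rfl⟩
  exact arrPi_lie_sigmaL_mem_holIdeal harr hclosed hL H hLH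

theorem holIdeal_le_comap_arrSigma (harr : IsArrangement 𝒜) (hclosed : IsClosedSub ℬ 𝒜)
    (hsub : ℬ ⊆ 𝒜) : holIdeal ℬ ≤ (holIdeal 𝒜).comap (arrSigma ℬ 𝒜 hsub) := by
  rw [holIdeal, LieSubmodule.lieSpan_le]
  rintro _ ⟨_, ⟨α, hα, β, hβ, hne, rfl⟩, H, hLH, rfl⟩
  have hαβ : ∀ c ∈ 𝒜, α ⊓ β ≤ c → c ∈ ℬ := fun c hc => hclosed.mem_of_inf_le harr hα hβ hne hc
  rw [SetLike.mem_coe, LieIdeal.mem_comap, LieHom.map_lie, arrSigma_of, arrSigma_sigmaL hsub hαβ]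
  exact LieSubmodule.subset_lieSpan ⟨α ⊓ β, ⟨α, hsub hα, β, hsub hβ, hne, rfl⟩, _, hLH, rfl⟩

end FreeLie

theorem closed_ideal_image {ℓ : ℕ} (ℬ 𝒜 : Finset (HypSp ℓ)) (harr : IsArrangement 𝒜)
    (hclosed : IsClosedSub ℬ 𝒜) (hsub : ℬ ⊆ 𝒜) :
    Submodule.map (arrPi ℬ 𝒜).toLinearMap (holIdeal 𝒜).toSubmodule
      = (holIdeal ℬ).toSubmodule ∧
    (holIdeal 𝒜).toSubmodule ⊓ LinearMap.range (arrSigma ℬ 𝒜 hsub).toLinearMap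
      = Submodule.map (arrSigma ℬ 𝒜 hsub).toLinearMap (holIdeal ℬ).toSubmodule := by
  have hpi := Submodule.map_le_iff_le_comap.mpr (holIdeal_le_comap_arrPi harr hclosed)
  have hsigma := Submodule.map_le_iff_le_comap.mpr (holIdeal_le_comap_arrSigma harr hclosed hsub)
  have hleft := leftInverse_arrPi_arrSigma hsub
  exact ⟨Submodule.map_eq_of_leftInverse hleft hpi hsigma,
    Submodule.inf_range_eq_map_of_leftInverse hleft hpi hsigma⟩

end
end

section
/- Let ℬ be a closed subarrangement of a central arrangement 𝒜. If α = [x_n, [x_{n-1}, ..., [x_1, x_0]...]] ∈ 𝕃(𝒜) is an iterated bracket with at least one entry x_i ∈ 𝒜∖ℬ, then modulo the ideal I(𝒜), α is congruent to a sum of iterated brackets all of whose entries lie in 𝒜∖ℬ. -/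
open Module

noncomputable section

/-- The left-normed bracket `[x_n, [x_{n-1}, ..., [x_1, x_0]...]]` with entries the
list `l = [x_n, ..., x_1]` and innermost entry `x₀`. -/
def nestedBracket {ℓ : ℕ} (𝒜 : Finset (HypSp ℓ)) (l : List {H : HypSp ℓ // H ∈ 𝒜})
    (x₀ : {H : HypSp ℓ // H ∈ 𝒜}) : FreeLie 𝒜 :=
  l.foldr (fun y acc => ⁅FreeLieAlgebra.of ℚ y, acc⁆) (FreeLieAlgebra.of ℚ x₀)

/-!
Let `T` be the span of the brackets with all entries outside `ℬ`, plus `I(𝒜)`. Since `T` contains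
every hyperplane outside `ℬ`, it suffices that `T` is an ideal, i.e. that `ad x` preserves `T` for
every hyperplane `x`. For `x ∉ ℬ` this is clear. For `b ∈ ℬ` and `x ∉ ℬ`, closedness forces every
hyperplane `H ≠ b` containing `L = x ∩ b` to lie outside `ℬ`, so the relation `[x, ΣL] ∈ I(𝒜)`
rewrites `[b, x]` as `[x, w]` with `w` a combination of hyperplanes outside `ℬ`. Pushing `ad b`
inside a good bracket with the Jacobi identity then produces only good brackets modulo `I(𝒜)`.
-/

open FreeLieAlgebra

namespace Submodule

variable {R L : Type*} [CommRing R] [LieRing L] [LieAlgebra R L]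

def lieStabilizer (N : Submodule R L) : LieSubalgebra R L where
  carrier := {x | ∀ y ∈ N, ⁅x, y⁆ ∈ N}
  zero_mem' y _ := by simp only [zero_lie, N.zero_mem]
  add_mem' hx hx' y hy := by rw [add_lie]; exact N.add_mem (hx y hy) (hx' y hy)
  smul_mem' t _ hx y hy := by rw [smul_lie]; exact N.smul_mem t (hx y hy)
  lie_mem' hx hx' y hy := by rw [lie_lie]; exact N.sub_mem (hx _ (hx' y hy)) (hx' _ (hx y hy))

theorem mem_lieStabilizer {N : Submodule R L} {x : L} :
    x ∈ N.lieStabilizer ↔ ∀ y ∈ N, ⁅x, y⁆ ∈ N :=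
  Iff.rfl

theorem lie_mem_of_mem_span {N : Submodule R L} {s : Set L} {x y : L}
    (h : ∀ z ∈ s, ⁅x, z⁆ ∈ N) (hy : y ∈ span R s) : ⁅x, y⁆ ∈ N := by
  have hle : span R s ≤ N.comap (LieAlgebra.ad R L x) :=
    span_le.mpr fun z hz => by
      simpa only [SetLike.mem_coe, mem_comap, LieAlgebra.ad_apply] using h z hz
  simpa only [mem_comap, LieAlgebra.ad_apply] using hle hy

theorem mem_lieStabilizer_span {s : Set L} {x : L} (h : ∀ z ∈ s, ⁅x, z⁆ ∈ span R s) :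
    x ∈ (span R s).lieStabilizer :=
  fun _ => lie_mem_of_mem_span h

theorem mem_lieStabilizer_span_sup {s : Set L} {J : LieIdeal R L} {x : L}
    (h : ∀ z ∈ s, ⁅x, z⁆ ∈ span R s ⊔ (J : Submodule R L)) :
    x ∈ (span R s ⊔ (J : Submodule R L)).lieStabilizer := by
  intro y hy
  obtain ⟨u, hu, j, hj, rfl⟩ := mem_sup.mp hy
  rw [lie_add]
  exact add_mem (lie_mem_of_mem_span h hu) (mem_sup_right (J.lie_mem hj))

end Submodule

theorem FreeLieAlgebra.eq_top_of_of_mem {R X : Type*} [CommRing R]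
    {K : LieSubalgebra R (FreeLieAlgebra R X)} (h : ∀ x, of R x ∈ K) : K = ⊤ := by
  let F : FreeLieAlgebra R X →ₗ⁅R⁆ K := lift R fun x => ⟨of R x, h x⟩
  have hF : K.incl.comp F = LieHom.id := hom_ext fun x => by simp [F]
  refine eq_top_iff.mpr fun z _ => ?_
  have hz : K.incl (F z) = z := LieHom.congr_fun hF z
  exact hz ▸ (F z).2

variable {ℓ : ℕ} {ℬ 𝒜 : Finset (HypSp ℓ)}

theorem nestedBracket_cons (c : {H : HypSp ℓ // H ∈ 𝒜}) (l : List {H : HypSp ℓ // H ∈ 𝒜})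
    (x₀ : {H : HypSp ℓ // H ∈ 𝒜}) :
    nestedBracket 𝒜 (c :: l) x₀ = ⁅of ℚ c, nestedBracket 𝒜 l x₀⁆ :=
  rfl

theorem nestedBracket_mem {N : Submodule ℚ (FreeLie 𝒜)} (hN : N.lieStabilizer = ⊤)
    (l : List {H : HypSp ℓ // H ∈ 𝒜}) (x₀ : {H : HypSp ℓ // H ∈ 𝒜})
    (h : of ℚ x₀ ∈ N ∨ ∃ y ∈ l, of ℚ y ∈ N) : nestedBracket 𝒜 l x₀ ∈ N := by
  have hlie : ∀ z, ∀ y ∈ N, ⁅z, y⁆ ∈ N := fun z => by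
    rw [← Submodule.mem_lieStabilizer, hN]; trivial
  induction l with
  | nil => exact h.resolve_right (by simp)
  | cons c l ih =>
    rw [nestedBracket_cons]
    by_cases hrest : of ℚ x₀ ∈ N ∨ ∃ y ∈ l, of ℚ y ∈ N
    · exact hlie _ _ (ih hrest)
    · have hc : of ℚ c ∈ N := by
        simp only [List.mem_cons, exists_eq_or_imp] at h
        rcases h with h | h | h
        exacts [absurd (.inl h) hrest, h, absurd (.inr h) hrest]
      rw [← lie_skew]
      exact N.neg_mem (hlie _ _ hc)

theorem IsArrangement.flatRank_inf_le_two (harr : IsArrangement 𝒜) {x b : HypSp ℓ}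
    (hx : x ∈ 𝒜) (hb : b ∈ 𝒜) : flatRank (x ⊓ b) ≤ 2 := by
  have hsum := Submodule.finrank_sup_add_finrank_inf_eq x b
  have hsup : Module.finrank ℂ ↥(x ⊔ b) ≤ ℓ := by
    simpa only [Module.finrank_fin_fun] using Submodule.finrank_le (x ⊔ b)
  have := harr x hx
  have := harr b hb
  unfold flatRank
  omega

theorem IsClosedSub.notMem_of_inf_le (hclosed : IsClosedSub ℬ 𝒜) (harr : IsArrangement 𝒜)
    {b x H : HypSp ℓ} (hb : b ∈ ℬ) (hx : x ∈ 𝒜) (hxB : x ∉ ℬ) (hHb : H ≠ b)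
    (hle : x ⊓ b ≤ H) : H ∉ ℬ := by
  intro hH
  have h3 := hclosed.2 H hH b hb hHb x hx hxB
  rw [inf_assoc, inf_comm b, inf_eq_right.mpr hle] at h3
  have := harr.flatRank_inf_le_two hx (hclosed.1 hb)
  omega

theorem IsClosedSub.sigmaL_inf_sub_of_mem_span (hclosed : IsClosedSub ℬ 𝒜)
    (harr : IsArrangement 𝒜) {b x : {H : HypSp ℓ // H ∈ 𝒜}} (hb : (b : HypSp ℓ) ∈ ℬ)
    (hx : (x : HypSp ℓ) ∉ ℬ) :
    sigmaL 𝒜 (x ⊓ b) - of ℚ b ∈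
      Submodule.span ℚ (of ℚ '' {H : {H : HypSp ℓ // H ∈ 𝒜} | (H : HypSp ℓ) ∉ ℬ}) := by
  classical
  rw [sigmaL, ← Finset.add_sum_erase _ _ (Finset.mem_attach 𝒜 b),
    if_pos (inf_le_right : (x : HypSp ℓ) ⊓ b ≤ b), add_sub_cancel_left]
  refine Submodule.sum_mem _ fun H hH => ?_
  split_ifs with hle
  · have hHb : (H : HypSp ℓ) ≠ b := fun h =>
      (Finset.mem_erase.mp hH).1 (Subtype.ext h)
    exact Submodule.subset_span ⟨H, hclosed.notMem_of_inf_le harr hb x.2 hx hHb hle, rfl⟩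
  · exact Submodule.zero_mem _

variable (ℬ 𝒜) in
def goodBrackets : Set (FreeLie 𝒜) :=
  {z : FreeLie 𝒜 | ∃ l' : List {H : HypSp ℓ // H ∈ 𝒜}, ∃ y₀ : {H : HypSp ℓ // H ∈ 𝒜},
    (∀ y ∈ l', (y : HypSp ℓ) ∉ ℬ) ∧ (y₀ : HypSp ℓ) ∉ ℬ ∧ z = nestedBracket 𝒜 l' y₀}

variable (ℬ 𝒜) in
abbrev goodSpan : Submodule ℚ (FreeLie 𝒜) :=
  Submodule.span ℚ (goodBrackets ℬ 𝒜)

theorem of_mem_goodSpan {c : {H : HypSp ℓ // H ∈ 𝒜}} (hc : (c : HypSp ℓ) ∉ ℬ) :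
    of ℚ c ∈ goodSpan ℬ 𝒜 :=
  Submodule.subset_span ⟨[], c, by simp, hc, rfl⟩

theorem lie_of_mem_goodBrackets {c : {H : HypSp ℓ // H ∈ 𝒜}} (hc : (c : HypSp ℓ) ∉ ℬ)
    {g : FreeLie 𝒜} (hg : g ∈ goodBrackets ℬ 𝒜) : ⁅of ℚ c, g⁆ ∈ goodBrackets ℬ 𝒜 := by
  obtain ⟨l, y₀, hl, hy₀, rfl⟩ := hg
  exact ⟨c :: l, y₀, List.forall_mem_cons.mpr ⟨hc, hl⟩, hy₀, rfl⟩

theorem of_mem_lieStabilizer_goodSpan {c : {H : HypSp ℓ // H ∈ 𝒜}}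
    (hc : (c : HypSp ℓ) ∉ ℬ) : of ℚ c ∈ (goodSpan ℬ 𝒜).lieStabilizer :=
  Submodule.mem_lieStabilizer_span fun _ hg =>
    Submodule.subset_span (lie_of_mem_goodBrackets hc hg)

/-- The relation `[x, ΣL] ∈ I(𝒜)` for `L = x ∩ b` trades `[b, x]` for `u = [x, ΣL - b]`. -/
theorem IsClosedSub.exists_lie_sub_mem_holIdeal (hclosed : IsClosedSub ℬ 𝒜)
    (harr : IsArrangement 𝒜) {b x : {H : HypSp ℓ // H ∈ 𝒜}} (hb : (b : HypSp ℓ) ∈ ℬ)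
    (hx : (x : HypSp ℓ) ∉ ℬ) :
    ∃ u ∈ (goodSpan ℬ 𝒜).lieStabilizer,
      u ∈ goodSpan ℬ 𝒜 ∧ ⁅of ℚ b, of ℚ x⁆ - u ∈ holIdeal 𝒜 := by
  set w := sigmaL 𝒜 (x ⊓ b) - of ℚ b
  have hw := hclosed.sigmaL_inf_sub_of_mem_span harr hb hx
  have hwK : w ∈ (goodSpan ℬ 𝒜).lieStabilizer := by
    refine (Submodule.span_le (p := (goodSpan ℬ 𝒜).lieStabilizer.toSubmodule)).mpr ?_ hw
    rintro _ ⟨H, hH, rfl⟩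
    exact of_mem_lieStabilizer_goodSpan hH
  have hwV : w ∈ goodSpan ℬ 𝒜 := by
    refine Submodule.span_le.mpr ?_ hw
    rintro _ ⟨H, hH, rfl⟩
    exact of_mem_goodSpan hH
  have hxK := of_mem_lieStabilizer_goodSpan hx
  refine ⟨⁅of ℚ x, w⁆, LieSubalgebra.lie_mem _ hxK hwK, hxK w hwV, ?_⟩
  have hxb : (x : HypSp ℓ) ≠ b := fun h => hx (h ▸ hb)
  have hrel : ⁅of ℚ x, sigmaL 𝒜 (x ⊓ b)⁆ ∈ holIdeal 𝒜 :=
    LieSubmodule.subset_lieSpan ⟨_, ⟨x, x.2, b, b.2, hxb, rfl⟩, x, inf_le_left, rfl⟩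
  have hdiff : ⁅of ℚ b, of ℚ x⁆ - ⁅of ℚ x, w⁆ = -⁅of ℚ x, sigmaL 𝒜 (x ⊓ b)⁆ := by
    rw [lie_sub, ← lie_skew (of ℚ x) (of ℚ b)]
    abel
  rw [hdiff]
  exact neg_mem hrel

variable (ℬ 𝒜) in
abbrev goodSup : Submodule ℚ (FreeLie 𝒜) :=
  goodSpan ℬ 𝒜 ⊔ (holIdeal 𝒜 : Submodule ℚ (FreeLie 𝒜))

theorem of_mem_lieStabilizer_goodSup_of_notMem {c : {H : HypSp ℓ // H ∈ 𝒜}}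
    (hc : (c : HypSp ℓ) ∉ ℬ) : of ℚ c ∈ (goodSup ℬ 𝒜).lieStabilizer :=
  Submodule.mem_lieStabilizer_span_sup fun _ hg =>
    Submodule.mem_sup_left (Submodule.subset_span (lie_of_mem_goodBrackets hc hg))

theorem IsClosedSub.lie_of_mem_goodSup (hclosed : IsClosedSub ℬ 𝒜) (harr : IsArrangement 𝒜)
    {b : {H : HypSp ℓ // H ∈ 𝒜}} (hb : (b : HypSp ℓ) ∈ ℬ) {g : FreeLie 𝒜}
    (hg : g ∈ goodBrackets ℬ 𝒜) : ⁅of ℚ b, g⁆ ∈ goodSup ℬ 𝒜 := by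
  obtain ⟨l, a₀, hl, ha₀, rfl⟩ := hg
  induction l with
  | nil =>
    obtain ⟨u, -, huV, huI⟩ := hclosed.exists_lie_sub_mem_holIdeal harr hb ha₀
    exact Submodule.mem_sup.mpr ⟨u, huV, _, huI, add_sub_cancel u _⟩
  | cons c l ih =>
    obtain ⟨hc, hl⟩ := List.forall_mem_cons.mp hl
    rw [nestedBracket_cons, leibniz_lie]
    refine add_mem ?_ (of_mem_lieStabilizer_goodSup_of_notMem hc _ (ih hl))
    obtain ⟨u, huK, -, huI⟩ := hclosed.exists_lie_sub_mem_holIdeal harr hb hc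
    rw [← add_sub_cancel u ⁅of ℚ b, of ℚ c⁆, add_lie]
    have hg : nestedBracket 𝒜 l a₀ ∈ goodSpan ℬ 𝒜 := Submodule.subset_span ⟨l, a₀, hl, ha₀, rfl⟩
    exact add_mem (Submodule.mem_sup_left (huK _ hg))
      (Submodule.mem_sup_right (lie_mem_left ℚ _ _ _ _ huI))

theorem IsClosedSub.lieStabilizer_goodSup_eq_top (hclosed : IsClosedSub ℬ 𝒜)
    (harr : IsArrangement 𝒜) : (goodSup ℬ 𝒜).lieStabilizer = ⊤ := by
  refine FreeLieAlgebra.eq_top_of_of_mem fun a => ?_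
  by_cases ha : (a : HypSp ℓ) ∈ ℬ
  · exact Submodule.mem_lieStabilizer_span_sup fun _ hg =>
      hclosed.lie_of_mem_goodSup harr ha hg
  · exact of_mem_lieStabilizer_goodSup_of_notMem ha

theorem closed_bracket_representative {ℓ : ℕ} (ℬ 𝒜 : Finset (HypSp ℓ))
    (harr : IsArrangement 𝒜) (hclosed : IsClosedSub ℬ 𝒜)
    (l : List {H : HypSp ℓ // H ∈ 𝒜}) (x₀ : {H : HypSp ℓ // H ∈ 𝒜})
    (hentry : (x₀ : HypSp ℓ) ∉ ℬ ∨ ∃ y ∈ l, (y : HypSp ℓ) ∉ ℬ) :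
    ∃ β ∈ Submodule.span ℚ
        {z : FreeLie 𝒜 | ∃ l' : List {H : HypSp ℓ // H ∈ 𝒜}, ∃ y₀ : {H : HypSp ℓ // H ∈ 𝒜},
          (∀ y ∈ l', (y : HypSp ℓ) ∉ ℬ) ∧ (y₀ : HypSp ℓ) ∉ ℬ ∧ z = nestedBracket 𝒜 l' y₀},
      nestedBracket 𝒜 l x₀ - β ∈ holIdeal 𝒜 := by
  have hletter : ∀ y : {H : HypSp ℓ // H ∈ 𝒜}, (y : HypSp ℓ) ∉ ℬ → of ℚ y ∈ goodSup ℬ 𝒜 :=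
    fun y hy => Submodule.mem_sup_left (of_mem_goodSpan hy)
  have hmem : nestedBracket 𝒜 l x₀ ∈ goodSup ℬ 𝒜 :=
    nestedBracket_mem (hclosed.lieStabilizer_goodSup_eq_top harr) l x₀
      (hentry.imp (hletter x₀) fun ⟨y, hy, hyB⟩ => ⟨y, hy, hletter y hyB⟩)
  obtain ⟨β, hβ, i, hi, hsum⟩ := Submodule.mem_sup.mp hmem
  refine ⟨β, hβ, ?_⟩
  rwa [← hsum, add_sub_cancel_left]
end
end

section
/- Let ℬ be a closed and complete subarrangement of a central arrangement 𝒜. Then r(𝒜) − r(ℬ) ≤ 1. -/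
open Module

noncomputable section

/-- `ℬ` is a complete subarrangement of `𝒜`. -/
def IsCompleteSub {ℓ : ℕ} (ℬ 𝒜 : Finset (HypSp ℓ)) : Prop :=
  ℬ ⊆ 𝒜 ∧ ∀ a ∈ 𝒜, a ∉ ℬ → ∀ b ∈ 𝒜, b ∉ ℬ → a ≠ b →
    ∃ γ ∈ ℬ, flatRank (a ⊓ b ⊓ γ) = 2

/-!
Fix a hyperplane `c ∈ 𝒜 ∖ ℬ` and put `X = ⋂ ℬ`. For any other `a ∈ 𝒜 ∖ ℬ`, completeness gives
`γ ∈ ℬ` with `r(a ∩ c ∩ γ) = 2 = r(c ∩ γ)`, so `c ∩ γ ⊆ a`. Hence every hyperplane of `𝒜`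
contains `X ∩ c`, i.e. `X ∩ c ⊆ ⋂ 𝒜`, and intersecting with one hyperplane raises the rank
by at most one.
-/

namespace Submodule

variable {K V : Type*} [Field K] [AddCommGroup V] [Module K V] [FiniteDimensional K V]

theorem finrank_le_finrank_inf_add_one (X c : Submodule K V)
    (hc : finrank K c + 1 = finrank K V) : finrank K X ≤ finrank K ↥(X ⊓ c) + 1 := by
  have h := finrank_sup_add_finrank_inf_eq X c
  have := (X ⊔ c).finrank_le
  omega

theorem finrank_inf_add_two_of_ne {c γ : Submodule K V} (hc : finrank K c + 1 = finrank K V)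
    (hγ : finrank K γ + 1 = finrank K V) (hne : c ≠ γ) :
    finrank K ↥(c ⊓ γ) + 2 = finrank K V := by
  have hlt : c ⊓ γ < c :=
    inf_lt_left.2 fun hle => hne (eq_of_le_of_finrank_eq hle (by omega))
  have := finrank_lt_finrank_of_lt hlt
  have := finrank_le_finrank_inf_add_one c γ hγ
  omega

theorem le_of_finrank_inf_eq {a W : Submodule K V} (h : finrank K ↥(a ⊓ W) = finrank K W) :
    W ≤ a :=
  eq_of_le_of_finrank_eq inf_le_right h ▸ inf_le_left

end Submodule

theorem IsArrangement.finrank_add_one {ℓ : ℕ} {𝒜 : Finset (HypSp ℓ)} (harr : IsArrangement 𝒜)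
    {H : HypSp ℓ} (hH : H ∈ 𝒜) : finrank ℂ H + 1 = finrank ℂ (Fin ℓ → ℂ) := by
  rw [finrank_fin_fun]
  exact harr H hH

theorem finrank_hypSp_le {ℓ : ℕ} (W : HypSp ℓ) : finrank ℂ W ≤ ℓ := by
  simpa using W.finrank_le

theorem IsCompleteSub.inf_le_of_notMem {ℓ : ℕ} {ℬ 𝒜 : Finset (HypSp ℓ)}
    (harr : IsArrangement 𝒜) (hcomplete : IsCompleteSub ℬ 𝒜) {a c : HypSp ℓ}
    (ha : a ∈ 𝒜) (haℬ : a ∉ ℬ) (hc : c ∈ 𝒜) (hcℬ : c ∉ ℬ) (hac : a ≠ c) :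
    ∃ γ ∈ ℬ, c ⊓ γ ≤ a := by
  obtain ⟨γ, hγ, hrank⟩ := hcomplete.2 a ha haℬ c hc hcℬ hac
  refine ⟨γ, hγ, Submodule.le_of_finrank_inf_eq ?_⟩
  have hcγ := Submodule.finrank_inf_add_two_of_ne (harr.finrank_add_one hc)
    (harr.finrank_add_one (hcomplete.1 hγ)) (fun h => hcℬ (h.symm ▸ hγ))
  have := finrank_hypSp_le (a ⊓ c ⊓ γ)
  rw [← inf_assoc]
  simp only [flatRank, finrank_fin_fun] at hrank hcγ
  omega

theorem IsCompleteSub.inf_inf_le_inf {ℓ : ℕ} {ℬ 𝒜 : Finset (HypSp ℓ)}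
    (harr : IsArrangement 𝒜) (hcomplete : IsCompleteSub ℬ 𝒜) {c : HypSp ℓ}
    (hc : c ∈ 𝒜) (hcℬ : c ∉ ℬ) : ℬ.inf id ⊓ c ≤ 𝒜.inf id := by
  refine Finset.le_inf fun a ha => ?_
  by_cases haℬ : a ∈ ℬ
  · exact inf_le_left.trans (Finset.inf_le haℬ)
  by_cases hac : a = c
  · exact hac ▸ inf_le_right
  obtain ⟨γ, hγ, hle⟩ := hcomplete.inf_le_of_notMem harr ha haℬ hc hcℬ hac
  calc ℬ.inf id ⊓ c ≤ c ⊓ γ := inf_comm c γ ▸ inf_le_inf_right c (Finset.inf_le hγ)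
    _ ≤ a := hle

theorem closed_complete_rank_general {ℓ : ℕ} (ℬ 𝒜 : Finset (HypSp ℓ))
    (harr : IsArrangement 𝒜) (hcomplete : IsCompleteSub ℬ 𝒜) :
    flatRank (𝒜.inf id) ≤ flatRank (ℬ.inf id) + 1 := by
  by_cases h𝒜ℬ : 𝒜 ⊆ ℬ
  · simp [h𝒜ℬ.antisymm hcomplete.1]
  obtain ⟨c, hc, hcℬ⟩ := Finset.not_subset.1 h𝒜ℬ
  have hstep := Submodule.finrank_le_finrank_inf_add_one (ℬ.inf id) c
    (harr.finrank_add_one hc)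
  have hmono := Submodule.finrank_mono (hcomplete.inf_inf_le_inf harr hc hcℬ)
  have := finrank_hypSp_le (ℬ.inf id)
  unfold flatRank
  omega

theorem closed_complete_rank {ℓ : ℕ} (ℬ 𝒜 : Finset (HypSp ℓ))
    (harr : IsArrangement 𝒜) (hclosed : IsClosedSub ℬ 𝒜) (hcomplete : IsCompleteSub ℬ 𝒜) :
    flatRank (𝒜.inf id) ≤ flatRank (ℬ.inf id) + 1 :=
  closed_complete_rank_general ℬ 𝒜 harr hcomplete

end
end
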